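/- arXiv:2310.06354 — 3 statements merged into one kernel-verified Lean document; each statement's English description precedes it below -/
import Mathlib

section
/- Let Δ ≥ 2 and let 𝒮 be a collection (with repetition allowed) of copies of the star K_{1,Δ} on a common vertex set V with |V| = n. Write n = a(2Δ-1) + b with a, b nonnegative integers, a ≥ 1, 0 ≤ b ≤ 2Δ-2, and write b(Δ-1) = k₁(2Δ-1) + k₂ with k₁, k₂ nonnegative integers, Δ ≤ k₂ ≤ 2Δ-2. If 𝒮 is rainbow K_{1,Δ}-free, then |𝒮| ≤ a(Δ-1)² + k₁(Δ-1) + k₂ - Δ. -/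
/-- A copy of the star K_{1,Δ} on the vertex set `V`: a center together with
a set of `Δ` leaves not containing the center. -/
structure StarGraph (V : Type) (Δ : ℕ) where
  center : V
  leaves : Finset V
  card_leaves : leaves.card = Δ
  center_not_mem : center ∉ leaves

/-- `x` and `y` are adjacent in the star `S`. -/
def StarGraph.Adj {V : Type} {Δ : ℕ} (S : StarGraph V Δ) (x y : V) : Prop :=
  (x = S.center ∧ y ∈ S.leaves) ∨ (y = S.center ∧ x ∈ S.leaves)

/-- The collection `S` has a rainbow star with center `u` and leaf set `L`:
there is an injective (on `L`) assignment of the leaves to members of the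
collection such that each edge from `u` to a leaf lies in the assigned star. -/
def IsRainbowStarAt {V : Type} {Δ t : ℕ} (S : Fin t → StarGraph V Δ) (u : V) (L : Finset V) : Prop :=
  u ∉ L ∧ ∃ g : V → Fin t, Set.InjOn g ↑L ∧ ∀ l ∈ L, (S (g l)).Adj u l

/-- The collection `S` contains a rainbow `K_{1,Δ}`. -/
def HasRainbowStar {V : Type} {Δ t : ℕ} (S : Fin t → StarGraph V Δ) : Prop :=
  ∃ (u : V) (L : Finset V), L.card = Δ ∧ IsRainbowStarAt S u L


/-!
Orient each star edge from the center to the leaf, let `N(u)` be the in-neighbourhood of `u` and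
`c(u)` the number of stars centered at `u`. If `|N(u)| + c(u) ≥ Δ`, take `p = min(|N(u)|, Δ)`
in-neighbours `v`, each with the edge `uv` coloured by a star centered at `v`, and `Δ - p` stars
centered at `u`; each of the latter has at least `Δ - p` leaves outside the chosen in-neighbours,
so by Hall they admit distinct such leaves, and together this is a rainbow `K_{1,Δ}`. Hence
`|N(u)| + c(u) ≤ Δ - 1`. Summing over `u`, and using that each of the `w` vertices that is a
center has out-degree at least `Δ`, gives `t + wΔ ≤ n(Δ - 1)`, while also `t ≤ w(Δ - 1)`.
Optimising over `w` yields the bound.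
-/

open Finset Function

theorem StarGraph.Adj.ne {V : Type} {Δ : ℕ} {S : StarGraph V Δ} {x y : V} (h : S.Adj x y) :
    x ≠ y := by
  rintro rfl
  rcases h with ⟨rfl, h⟩ | ⟨rfl, h⟩ <;> exact S.center_not_mem h

theorem Finset.exists_injective_forall_mem_of_card_le {ι α : Type*} [Fintype ι] [DecidableEq α]
    (s : ι → Finset α) (h : ∀ i, Fintype.card ι ≤ #(s i)) :
    ∃ f : ι → α, Injective f ∧ ∀ i, f i ∈ s i := by
  refine (all_card_le_biUnion_card_iff_existsInjective' s).1 fun A => ?_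
  rcases A.eq_empty_or_nonempty with rfl | ⟨i, hi⟩
  · simp
  · calc #A ≤ Fintype.card ι := card_le_univ A
      _ ≤ #(s i) := h i
      _ ≤ #(A.biUnion s) := card_le_card (subset_biUnion_of_mem s hi)

section Collection

variable {V : Type} {Δ t : ℕ} (S : Fin t → StarGraph V Δ)

theorem hasRainbowStar_of_injective {ι : Type*} [Fintype ι] [Nonempty ι]
    (hι : Fintype.card ι = Δ) {u : V} {c : ι → Fin t} {ℓ : ι → V} (hc : Injective c)
    (hℓ : Injective ℓ) (hadj : ∀ i, (S (c i)).Adj u (ℓ i)) : HasRainbowStar S := by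
  classical
  have hinv : ∀ i, invFun ℓ (ℓ i) = i := leftInverse_invFun hℓ
  refine ⟨u, univ.image ℓ, by rw [card_image_of_injective _ hℓ, card_univ, hι], ?_,
    c ∘ invFun ℓ, ?_, ?_⟩
  · simpa using fun i h => (hadj i).ne h.symm
  · rintro _ hx _ hy hxy
    simp only [coe_image, coe_univ, Set.image_univ, Set.mem_range] at hx hy
    obtain ⟨i, rfl⟩ := hx
    obtain ⟨j, rfl⟩ := hy
    simp only [comp_apply, hinv] at hxy
    rw [hc hxy]
  · simp only [mem_image, mem_univ, true_and, forall_exists_index, forall_apply_eq_imp_iff,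
      comp_apply, hinv]
    exact hadj

variable [DecidableEq V]

def centerCount (u : V) : ℕ := #{i | (S i).center = u}

def centers : Finset V := univ.image fun i => (S i).center

theorem card_eq_sum_centerCount : t = ∑ u ∈ centers S, centerCount S u :=
  (card_fin t).symm.trans (card_eq_sum_card_image _ univ)

variable [Fintype V]

def inNbrs (u : V) : Finset V := {v | ∃ i, (S i).center = v ∧ u ∈ (S i).leaves}

theorem card_inNbrs_add_centerCount_le (hΔ : 0 < Δ) (hfree : ¬HasRainbowStar S) (u : V) :
    #(inNbrs S u) + centerCount S u ≤ Δ - 1 := by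
  by_contra! hlarge
  obtain ⟨N, hN, hNcard⟩ := exists_subset_card_eq (min_le_left #(inNbrs S u) Δ)
  obtain ⟨C, hC, hCcard⟩ := exists_subset_card_eq
    (show Δ - min #(inNbrs S u) Δ ≤ #{i | (S i).center = u} by unfold centerCount at hlarge; omega)
  choose σ hσ using fun v : N => (mem_filter.1 (hN v.2)).2
  have hσ_ne : ∀ v : N, (v : V) ≠ u := fun v h =>
    (S (σ v)).center_not_mem ((hσ v).1.trans h ▸ (hσ v).2)
  have hC_center : ∀ j : C, (S j).center = u := fun j => (mem_filter.1 (hC j.2)).2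
  obtain ⟨f, hf, hfmem⟩ := exists_injective_forall_mem_of_card_le (fun j : C => (S j).leaves \ N)
    fun j => by
      have := le_card_sdiff N (S j).leaves
      rw [(S j).card_leaves] at this
      rw [Fintype.card_coe]
      omega
  have hcard : Fintype.card (N ⊕ C) = Δ := by
    rw [Fintype.card_sum, Fintype.card_coe, Fintype.card_coe]
    omega
  have : Nonempty (N ⊕ C) := Fintype.card_pos_iff.1 (hcard ▸ hΔ)
  refine hfree (hasRainbowStar_of_injective S hcard (u := u) (c := Sum.elim σ (↑))
    (ℓ := Sum.elim (↑) f) ?_ ?_ ?_)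
  · refine Injective.sumElim (fun v w h => Subtype.ext ?_) Subtype.val_injective fun v j h => ?_
    · rw [← (hσ v).1, ← (hσ w).1, h]
    · exact hσ_ne v ((hσ v).1.symm.trans (h ▸ hC_center j))
  · exact Subtype.val_injective.sumElim hf fun v j h =>
      (mem_sdiff.1 (hfmem j)).2 (h ▸ v.2)
  · rintro (v | j)
    · exact Or.inr ⟨(hσ v).1.symm, (hσ v).2⟩
    · exact Or.inl ⟨(hC_center j).symm, (mem_sdiff.1 (hfmem j)).1⟩

theorem card_centers_mul_le_sum_card_inNbrs :
    #(centers S) * Δ ≤ ∑ u, #(inNbrs S u) := by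
  have hswap : ∑ u, #(inNbrs S u) =
      ∑ v, #{u | ∃ i, (S i).center = v ∧ u ∈ (S i).leaves} := by
    simp only [inNbrs, card_filter]
    exact sum_comm
  have hout : ∀ v ∈ centers S, Δ ≤ #{u | ∃ i, (S i).center = v ∧ u ∈ (S i).leaves} := by
    intro v hv
    obtain ⟨i, -, rfl⟩ := mem_image.1 hv
    exact (S i).card_leaves.symm.trans_le
      (card_le_card fun l hl => mem_filter.2 ⟨mem_univ l, i, rfl, hl⟩)
  calc #(centers S) * Δ = ∑ _v ∈ centers S, Δ := by rw [sum_const, smul_eq_mul]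
    _ ≤ ∑ v ∈ centers S, #{u | ∃ i, (S i).center = v ∧ u ∈ (S i).leaves} := sum_le_sum hout
    _ ≤ ∑ v, #{u | ∃ i, (S i).center = v ∧ u ∈ (S i).leaves} :=
      sum_le_sum_of_subset (subset_univ _)
    _ = ∑ u, #(inNbrs S u) := hswap.symm

theorem add_card_centers_mul_le (hΔ : 0 < Δ) (hfree : ¬HasRainbowStar S) :
    t + #(centers S) * Δ ≤ Fintype.card V * (Δ - 1) := by
  have hsum := sum_le_sum fun u (_ : u ∈ univ) => card_inNbrs_add_centerCount_le S hΔ hfree u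
  rw [sum_add_distrib, sum_const, card_univ, smul_eq_mul] at hsum
  have ht : t ≤ ∑ u, centerCount S u :=
    (card_eq_sum_centerCount S).trans_le (sum_le_sum_of_subset (subset_univ _))
  linarith [card_centers_mul_le_sum_card_inNbrs S]

theorem le_card_centers_mul (hΔ : 0 < Δ) (hfree : ¬HasRainbowStar S) :
    t ≤ #(centers S) * (Δ - 1) :=
  calc t = ∑ u ∈ centers S, centerCount S u := card_eq_sum_centerCount S
    _ ≤ ∑ _u ∈ centers S, (Δ - 1) := sum_le_sum fun u _ =>
      (Nat.le_add_left _ _).trans (card_inNbrs_add_centerCount_le S hΔ hfree u)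
    _ = #(centers S) * (Δ - 1) := by rw [sum_const, smul_eq_mul]

end Collection

theorem starGraph_bound_large_k2_general {V : Type} [Fintype V]
    (Δ n a b k₁ k₂ t : ℕ) (hΔ : 2 ≤ Δ)
    (hcard : Fintype.card V = n)
    (hn : n = a * (2 * Δ - 1) + b)
    (hbk : b * (Δ - 1) = k₁ * (2 * Δ - 1) + k₂)
    (hk₂ : Δ ≤ k₂)
    (S : Fin t → StarGraph V Δ) (hfree : ¬ HasRainbowStar S) :
    t ≤ a * (Δ - 1) ^ 2 + k₁ * (Δ - 1) + k₂ - Δ := by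
  classical
  have hA := add_card_centers_mul_le S (by omega) hfree
  have hB := le_card_centers_mul S (by omega) hfree
  obtain ⟨d, rfl⟩ : ∃ d, Δ = d + 1 := ⟨Δ - 1, by omega⟩
  rw [show 2 * (d + 1) - 1 = 2 * d + 1 by omega] at hn hbk
  simp only [Nat.add_sub_cancel] at hA hB hbk ⊢
  set w := #(centers S)
  have hnd : n * d = (a * d + k₁) * (2 * d + 1) + k₂ := by
    rw [hn, add_mul, hbk]
    ring
  rw [hcard, hnd] at hA
  rw [show a * d ^ 2 + k₁ * d = (a * d + k₁) * d by ring]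
  apply Nat.le_sub_of_add_le
  rcases le_or_gt w (a * d + k₁) with hw | hw
  · nlinarith
  · nlinarith

theorem starGraph_bound_large_k2 {V : Type} [Fintype V]
    (Δ n a b k₁ k₂ t : ℕ) (hΔ : 2 ≤ Δ)
    (hcard : Fintype.card V = n)
    (hn : n = a * (2 * Δ - 1) + b) (ha : 1 ≤ a) (hb : b ≤ 2 * Δ - 2)
    (hbk : b * (Δ - 1) = k₁ * (2 * Δ - 1) + k₂)
    (hk₂ : Δ ≤ k₂) (hk₂' : k₂ ≤ 2 * Δ - 2)
    (S : Fin t → StarGraph V Δ) (hfree : ¬ HasRainbowStar S) :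
    t ≤ a * (Δ - 1) ^ 2 + k₁ * (Δ - 1) + k₂ - Δ :=
  starGraph_bound_large_k2_general Δ n a b k₁ k₂ t hΔ hcard hn hbk hk₂ S hfree
end

section
/- Let Δ ≥ 2 and let V be a vertex set with |V| = n = a(2Δ-1) + b, where a, b are nonnegative integers, a ≥ 1, 0 ≤ b ≤ 2Δ-2, and b(Δ-1) = k₁(2Δ-1) + k₂ with k₁, k₂ nonnegative integers and Δ ≤ k₂ ≤ 2Δ-2. Then there exists a collection 𝒮 (with repetition allowed) of copies of the star K_{1,Δ} on V with |𝒮| = a(Δ-1)² + k₁(Δ-1) + k₂ - Δ such that 𝒮 is rainbow K_{1,Δ}-free. -/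
/-!
Put `M = a(Δ-1) + k₁` centres aside; each carries `Δ-1` copies of one star with leaves in the
pool of the remaining `P = n - M` vertices, and `k₂ - Δ` copies of one further star `X` are
placed inside the pool. A rainbow star at `u` uses each star centred at `u` at most once and
otherwise only edges to centres of stars having `u` as a leaf, so it suffices that these two
counts add up to at most `Δ-1` at every vertex. A pool vertex may then be a leaf of as many main
stars as `Δ-1` minus its load from `X`, and the hypotheses amount to
`P(Δ-1) = (M+1)Δ + (k₂ - Δ)`, which says exactly that these capacities add up to `MΔ`. Leaf
sets of size `Δ` realising the capacities exist by induction on `M`: the first one contains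
every vertex whose capacity equals `M`.
-/

open Finset

section Multiplicities

variable {W : Type*} [Fintype W] {k M : ℕ}

theorem exists_finset_card_eq_of_sum_eq_succ_mul {c : W → ℕ} (hc : ∀ w, c w ≤ M + 1)
    (hsum : ∑ w, c w = (M + 1) * k) :
    ∃ B : Finset W, #B = k ∧ (∀ w ∈ B, 0 < c w) ∧ ∀ w ∉ B, c w ≤ M := by
  set F : Finset W := {w | c w = M + 1}
  set Z : Finset W := {w | 0 < c w}
  have hFZ : F ⊆ Z := fun w hw => by simp_all [F, Z]
  have hF : #F ≤ k := by
    refine Nat.le_of_mul_le_mul_left ?_ M.succ_pos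
    calc (M + 1) * #F = ∑ w ∈ F, c w := by
          rw [sum_congr rfl fun w hw => (mem_filter.mp hw).2, sum_const, smul_eq_mul, mul_comm]
      _ ≤ ∑ w, c w := sum_le_sum_of_subset (subset_univ F)
      _ = (M + 1) * k := hsum
  have hZ : k ≤ #Z := by
    refine Nat.le_of_mul_le_mul_left ?_ M.succ_pos
    calc (M + 1) * k = ∑ w ∈ Z, c w := by
          rw [← hsum, sum_filter_of_ne fun w _ hw => Nat.pos_of_ne_zero hw]
      _ ≤ ∑ _w ∈ Z, (M + 1) := sum_le_sum fun w _ => hc w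
      _ = (M + 1) * #Z := by rw [sum_const, smul_eq_mul, mul_comm]
  obtain ⟨B, hFB, hBZ, hB⟩ := exists_subsuperset_card_eq hFZ hF hZ
  refine ⟨B, hB, fun w hw => (mem_filter.mp (hBZ hw)).2, fun w hw => ?_⟩
  have : c w ≠ M + 1 := fun h => hw (hFB (by simp [F, h]))
  have := hc w
  omega

theorem exists_finsets_card_eq_of_sum_eq [DecidableEq W] (c : W → ℕ) (hc : ∀ w, c w ≤ M)
    (hsum : ∑ w, c w = M * k) :
    ∃ B : Fin M → Finset W, (∀ i, #(B i) = k) ∧ ∀ w, #{i | w ∈ B i} = c w := by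
  induction M generalizing c with
  | zero =>
    refine ⟨Fin.elim0, fun i => i.elim0, fun w => ?_⟩
    simp only [zero_mul, sum_eq_zero_iff, mem_univ, true_implies] at hsum
    simp [hsum w]
  | succ M ih =>
    obtain ⟨B₀, hB₀, hpos, hle⟩ := exists_finset_card_eq_of_sum_eq_succ_mul hc hsum
    set c' : W → ℕ := fun w => c w - if w ∈ B₀ then 1 else 0
    have hc'c : ∀ w, c' w + (if w ∈ B₀ then 1 else 0) = c w := fun w => by
      simp only [c']
      split_ifs with hw
      · exact Nat.sub_add_cancel (hpos w hw)
      · rfl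
    have hsum' : ∑ w, c' w = M * k := by
      have := sum_add_distrib (s := univ) (f := c') (g := fun w => if w ∈ B₀ then 1 else 0)
      rw [sum_congr rfl fun w _ => hc'c w, hsum, sum_boole, filter_mem_eq_inter, univ_inter,
        hB₀] at this
      linarith
    have hc' : ∀ w, c' w ≤ M := fun w => by
      by_cases hw : w ∈ B₀
      · simp only [c', if_pos hw]
        have := hc w
        omega
      · simpa [c', hw] using hle w hw
    obtain ⟨B, hB, hcount⟩ := ih c' hc' hsum'
    refine ⟨Fin.cons B₀ B, Fin.cases hB₀ hB, fun w => ?_⟩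
    rw [Fin.card_filter_univ_succ, ← hc'c w]
    simp only [Fin.cons_zero, Fin.cons_succ, hcount]
    split_ifs <;> rfl

end Multiplicities

def replicateStars {V : Type} {Δ m : ℕ} (k : ℕ) (S : Fin m → StarGraph V Δ) :
    Fin (m * k) → StarGraph V Δ :=
  fun β => S (finProdFinEquiv.symm β).1

section Load

variable {V : Type} [DecidableEq V] {Δ t : ℕ}

def starsCenteredAt (S : Fin t → StarGraph V Δ) (u : V) : Finset (Fin t) :=
  {β | (S β).center = u}

def leafNeighbors (S : Fin t → StarGraph V Δ) (u : V) : Finset V :=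
  ({β | u ∈ (S β).leaves} : Finset (Fin t)).image fun β => (S β).center

theorem mem_leafNeighbors {S : Fin t → StarGraph V Δ} {u v : V} :
    v ∈ leafNeighbors S u ↔ ∃ β, u ∈ (S β).leaves ∧ (S β).center = v := by
  simp [leafNeighbors]

theorem not_hasRainbowStar_of_card_add_card_lt (S : Fin t → StarGraph V Δ)
    (h : ∀ u, #(starsCenteredAt S u) + #(leafNeighbors S u) < Δ) : ¬ HasRainbowStar S := by
  rintro ⟨u, L, hL, -, g, hg, hadj⟩
  have hcentered : #{l ∈ L | (S (g l)).center = u} ≤ #(starsCenteredAt S u) :=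
    card_le_card_of_injOn g (fun l hl => by simpa [starsCenteredAt] using (mem_filter.mp hl).2)
      (hg.mono fun l hl => (mem_filter.mp hl).1)
  have hleaf : {l ∈ L | ¬ (S (g l)).center = u} ⊆ leafNeighbors S u := fun l hl => by
    obtain ⟨hlL, hne⟩ := mem_filter.mp hl
    rcases hadj l hlL with ⟨hu, -⟩ | ⟨hl, hu⟩
    · exact absurd hu.symm hne
    · exact mem_leafNeighbors.mpr ⟨g l, hu, hl.symm⟩
  have := card_filter_add_card_filter_not (s := L) (fun l => (S (g l)).center = u)
  have := card_le_card hleaf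
  have := h u
  omega

theorem card_starsCenteredAt_append {m k : ℕ} (S : Fin m → StarGraph V Δ)
    (S' : Fin k → StarGraph V Δ) (u : V) :
    #(starsCenteredAt (Fin.append S S') u) = #(starsCenteredAt S u) + #(starsCenteredAt S' u) := by
  simp only [starsCenteredAt, card_filter, Fin.sum_univ_add, Fin.append_left, Fin.append_right]

theorem leafNeighbors_append {m k : ℕ} (S : Fin m → StarGraph V Δ)
    (S' : Fin k → StarGraph V Δ) (u : V) :
    leafNeighbors (Fin.append S S') u = leafNeighbors S u ∪ leafNeighbors S' u := by
  ext v
  rw [mem_union, ← not_iff_not]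
  simp only [not_or, mem_leafNeighbors, not_exists, Fin.forall_fin_add, Fin.append_left,
    Fin.append_right]

theorem card_starsCenteredAt_replicateStars {m k : ℕ} (S : Fin m → StarGraph V Δ) (u : V) :
    #(starsCenteredAt (replicateStars k S) u) =
      k * #(starsCenteredAt S u) := by
  have : starsCenteredAt (replicateStars k S) u =
      (starsCenteredAt S u ×ˢ univ).map finProdFinEquiv.toEmbedding := by
    ext β
    simp [starsCenteredAt, replicateStars, mem_map_equiv]
  rw [this, card_map, card_product, card_univ, Fintype.card_fin, mul_comm]

theorem leafNeighbors_replicateStars_subset {m k : ℕ} (S : Fin m → StarGraph V Δ) (u : V) :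
    leafNeighbors (replicateStars k S) u ⊆ leafNeighbors S u := fun v hv => by
  obtain ⟨β, hβ⟩ := mem_leafNeighbors.mp hv
  exact mem_leafNeighbors.mpr ⟨_, hβ⟩

theorem card_leafNeighbors_le (S : Fin t → StarGraph V Δ) (u : V) :
    #(leafNeighbors S u) ≤ #{β | u ∈ (S β).leaves} :=
  card_image_le

theorem card_starsCenteredAt_const (X : StarGraph V Δ) (u : V) :
    #(starsCenteredAt (fun _ : Fin t => X) u) = if X.center = u then t else 0 := by
  split_ifs with h <;> simp [starsCenteredAt, h]

theorem card_leafNeighbors_const_le (X : StarGraph V Δ) (u : V) :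
    #(leafNeighbors (fun _ : Fin t => X) u) ≤ if u ∈ X.leaves then 1 else 0 := by
  split_ifs with h
  · exact card_le_one.mpr fun v hv w hw => by
      obtain ⟨-, -, rfl⟩ := mem_leafNeighbors.mp hv
      obtain ⟨-, -, rfl⟩ := mem_leafNeighbors.mp hw
      rfl
  · simp [leafNeighbors, h]

end Load

theorem exists_stars_of_leaf_multiplicities {V : Type} [Fintype V] [DecidableEq V] {M Δ : ℕ}
    (z : Fin M → V) (c : V → ℕ) (hc : ∀ u, c u ≤ M) (hcz : ∀ i, c (z i) = 0)
    (hsum : ∑ u, c u = M * Δ) :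
    ∃ T : Fin M → StarGraph V Δ, (∀ i, (T i).center = z i) ∧
      ∀ u, #{i | u ∈ (T i).leaves} = c u := by
  obtain ⟨B, hB, hcount⟩ := exists_finsets_card_eq_of_sum_eq c hc hsum
  have hzB : ∀ i, z i ∉ B i := fun i hi => by
    have : 0 < #{j | z i ∈ B j} := card_pos.mpr ⟨i, mem_filter.mpr ⟨mem_univ i, hi⟩⟩
    rw [hcount, hcz] at this
    exact this.false
  exact ⟨fun i => ⟨z i, B i, hB i, hzB i⟩, fun _ => rfl, hcount⟩

theorem card_starsCenteredAt_le_one {V : Type} [DecidableEq V] {Δ t : ℕ}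
    {S : Fin t → StarGraph V Δ} (hS : Function.Injective fun β => (S β).center) (u : V) :
    #(starsCenteredAt S u) ≤ 1 :=
  card_le_one.mpr fun _ hβ _ hγ => hS ((mem_filter.mp hβ).2.trans (mem_filter.mp hγ).2.symm)

theorem not_hasRainbowStar_append_replicateStars {V : Type} [DecidableEq V] {M d s : ℕ}
    (T : Fin M → StarGraph V (d + 1)) (X : StarGraph V (d + 1))
    (h : ∀ u, d * #(starsCenteredAt T u) + #{i | u ∈ (T i).leaves} +
      (if X.center = u then s else 0) + (if u ∈ X.leaves then 1 else 0) ≤ d) :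
    ¬ HasRainbowStar (Fin.append (replicateStars d T) fun _ : Fin s => X) := by
  refine not_hasRainbowStar_of_card_add_card_lt _ fun u => ?_
  rw [card_starsCenteredAt_append, leafNeighbors_append, card_starsCenteredAt_replicateStars,
    card_starsCenteredAt_const]
  have hleaf := (card_union_le (leafNeighbors (replicateStars d T) u)
    (leafNeighbors (fun _ : Fin s => X) u)).trans (add_le_add
      ((card_le_card (leafNeighbors_replicateStars_subset T u)).trans (card_leafNeighbors_le T u))
      (card_leafNeighbors_const_le X u))
  have := h u
  omega

theorem exists_not_hasRainbowStar {V : Type} [Fintype V] (d M P s : ℕ)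
    (hV : Fintype.card V = M + P) (hP : P * d = (M + 1) * (d + 1) + s) (hdM : d ≤ M)
    (hsd : s ≤ d) : ∃ S : Fin (M * d + s) → StarGraph V (d + 1), ¬ HasRainbowStar S := by
  classical
  have hd : 1 ≤ d := Nat.pos_of_ne_zero fun h => by simp [h] at hP; omega
  have hPd : d + 2 ≤ P := by nlinarith
  obtain ⟨z⟩ := Function.Embedding.nonempty_of_card_le (α := Fin M) (β := V)
    (by rw [Fintype.card_fin, hV]; omega)
  set C : Finset V := univ.map z
  have hC : #C = M := by simp [C]
  have hCc : #Cᶜ = P := by rw [card_compl, card_map, card_univ, Fintype.card_fin, hV]; omega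
  obtain ⟨x₀, hx₀⟩ : Cᶜ.Nonempty := card_pos.mp (by omega)
  obtain ⟨L₀, hL₀C, hL₀⟩ := exists_subset_card_eq (s := Cᶜ.erase x₀) (n := d + 1)
    (by rw [card_erase_of_mem hx₀]; omega)
  let X : StarGraph V (d + 1) := ⟨x₀, L₀, hL₀, fun h => by simpa using hL₀C h⟩
  -- the load at `u` from the centre copies and from `X`
  let ρ : V → ℕ := fun u =>
    (if u ∈ C then d else 0) + (if x₀ = u then s else 0) + (if u ∈ L₀ then 1 else 0)
  have hρ : ∀ u, ρ u ≤ d := fun u => by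
    by_cases hu : u ∈ C
    · have h₀ : x₀ ≠ u := fun h => mem_compl.mp hx₀ (h ▸ hu)
      have hL : u ∉ L₀ := fun h => mem_compl.mp (mem_of_mem_erase (hL₀C h)) hu
      simp [ρ, hu, h₀, hL]
    · by_cases h₀ : x₀ = u
      · have hL : u ∉ L₀ := fun h => ne_of_mem_erase (hL₀C h) h₀.symm
        simp [ρ, hu, h₀, hL, hsd]
      · simp only [ρ, hu, h₀, if_false]
        split_ifs <;> omega
  have hsumρ : ∑ u, ρ u = M * d + s + (d + 1) := by
    simp only [ρ, sum_add_distrib, sum_ite_mem, univ_inter, sum_const, smul_eq_mul, hC,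
      sum_ite_eq, mem_univ, if_true, hL₀, mul_one]
  have hsum : ∑ u, (d - ρ u) = M * (d + 1) := by
    have : ∑ u, (d - ρ u) + ∑ u, ρ u = (M + P) * d := by
      rw [← sum_add_distrib, sum_congr rfl fun u _ => Nat.sub_add_cancel (hρ u), sum_const,
        card_univ, hV, smul_eq_mul]
    nlinarith
  have hρz : ∀ i, d - ρ (z i) = 0 := fun i => by
    have hzC : z i ∈ C := mem_map_of_mem z (mem_univ i)
    simp only [ρ, hzC, if_true]
    omega
  obtain ⟨T, hTz, hcount⟩ := exists_stars_of_leaf_multiplicities z (fun u => d - ρ u)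
    (fun u => by omega) hρz hsum
  refine ⟨_, not_hasRainbowStar_append_replicateStars T X fun u => ?_⟩
  have hcenter : d * #(starsCenteredAt T u) ≤ if u ∈ C then d else 0 := by
    split_ifs with hu
    · have := card_starsCenteredAt_le_one (S := T) (by simpa [hTz] using z.injective) u
      nlinarith
    · have : starsCenteredAt T u = ∅ := filter_eq_empty_iff.mpr fun i _ h =>
        hu (by rw [← h, hTz]; exact mem_map_of_mem z (mem_univ i))
      simp [this]
  have := hρ u
  simp only [hcount, X]
  simp only [ρ] at this ⊢
  omega

theorem starGraph_extremal_exists_large_k2_general {V : Type} [Fintype V]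
    (Δ n a b k₁ k₂ : ℕ) (hΔ : 2 ≤ Δ)
    (hcard : Fintype.card V = n)
    (hn : n = a * (2 * Δ - 1) + b) (ha : 1 ≤ a)
    (hbk : b * (Δ - 1) = k₁ * (2 * Δ - 1) + k₂)
    (hk₂ : Δ ≤ k₂) (hk₂' : k₂ ≤ 2 * Δ - 2) :
    ∃ S : Fin (a * (Δ - 1) ^ 2 + k₁ * (Δ - 1) + k₂ - Δ) → StarGraph V Δ,
      ¬ HasRainbowStar S := by
  obtain ⟨d, rfl⟩ : ∃ d, Δ = d + 1 := ⟨Δ - 1, by omega⟩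
  obtain ⟨M, hM⟩ : ∃ M, a * d + k₁ = M := ⟨_, rfl⟩
  simp only [show 2 * (d + 1) - 1 = 2 * d + 1 by omega, Nat.add_sub_cancel] at hn hbk
  have hnd : n * d = M * (2 * d + 1) + k₂ := by rw [hn]; linear_combination hbk + (2 * d + 1) * hM
  have hMn : M ≤ n := Nat.le_of_mul_le_mul_right (by nlinarith : M * d ≤ n * d) (by omega)
  have hP : (n - M) * d = (M + 1) * (d + 1) + (k₂ - (d + 1)) := by
    zify [hMn, hk₂] at hnd ⊢
    linear_combination hnd
  have hsize :
      a * (d + 1 - 1) ^ 2 + k₁ * (d + 1 - 1) + k₂ - (d + 1) = M * d + (k₂ - (d + 1)) := by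
    rw [Nat.add_sub_cancel, ← hM]
    ring_nf
    omega
  rw [hsize]
  exact exists_not_hasRainbowStar d M (n - M) _ (by omega) hP (by nlinarith) (by omega)

theorem starGraph_extremal_exists_large_k2 {V : Type} [Fintype V]
    (Δ n a b k₁ k₂ : ℕ) (hΔ : 2 ≤ Δ)
    (hcard : Fintype.card V = n)
    (hn : n = a * (2 * Δ - 1) + b) (ha : 1 ≤ a) (hb : b ≤ 2 * Δ - 2)
    (hbk : b * (Δ - 1) = k₁ * (2 * Δ - 1) + k₂)
    (hk₂ : Δ ≤ k₂) (hk₂' : k₂ ≤ 2 * Δ - 2) :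
    ∃ S : Fin (a * (Δ - 1) ^ 2 + k₁ * (Δ - 1) + k₂ - Δ) → StarGraph V Δ,
      ¬ HasRainbowStar S :=
  starGraph_extremal_exists_large_k2_general Δ n a b k₁ k₂ hΔ hcard hn ha hbk hk₂ hk₂'
end

section
/- Let n ≥ 2 and let 𝒯 = {T₁,…,T_t} be a collection (with repetition allowed) of trees on a common vertex set V, where |V| = m, each T_i is a tree with exactly n vertices (V(T_i) ⊆ V), and n divides m. If 𝒯 contains no rainbow tree with n vertices and t = m(n-2)/n, then there is a partition of V into m/n parts V₁,…,V_{m/n}, each of size n, such that every T_i is a spanning tree of one of the parts and each part V_j is the vertex set of exactly n-2 of the trees T_i. -/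
/-!
Write `A(v)` for the set of trees containing the vertex `v`. Growing a rainbow tree greedily from
`v`, adding at each step an edge of a not yet used tree of `A(v)` that leaves the current tree,
shows `|A(v)| ≤ n - 2`; double counting gives `∑ᵥ |A(v)| = t n = m (n - 2)`, so `|A(v)| = n - 2`
for every `v`. Growing from `w` with all of `A(w)` yields an `(n - 1)`-set `R ∋ w` that no tree
outside `A(w)` can meet, so `A` is constant on `R`. For `n ≥ 3` two such sets inside the same
tree intersect, hence `A` is constant on the vertex set of every tree, and the fibres of `A` are
exactly these vertex sets. For `n = 2` there are no trees and any partition into pairs works.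
-/

/-- `R` is a rainbow tree in the collection `T`: `R` (a subgraph of the complete graph
on `V`, i.e. a graph on a subset of `V`) is a tree, and there is an injective assignment
of its edges to members of the collection such that each edge lies in the assigned graph. -/
def IsRainbowSubtree {V ι : Type} (T : ι → (⊤ : SimpleGraph V).Subgraph)
    (R : (⊤ : SimpleGraph V).Subgraph) : Prop :=
  R.coe.IsTree ∧
    ∃ g : Sym2 V → ι, Set.InjOn g R.edgeSet ∧ ∀ e ∈ R.edgeSet, e ∈ (T (g e)).edgeSet

/-- The collection `T` contains a rainbow tree with `n` vertices. -/
def HasRainbowTree {V ι : Type} (T : ι → (⊤ : SimpleGraph V).Subgraph) (n : ℕ) : Prop :=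
  ∃ R : (⊤ : SimpleGraph V).Subgraph, IsRainbowSubtree T R ∧ R.verts.ncard = n

namespace SimpleGraph.Subgraph

variable {V : Type*} {G : SimpleGraph V}

lemma card_edgeSet_coe (H : G.Subgraph) : Nat.card H.coe.edgeSet = H.edgeSet.ncard := by
  rw [← image_coe_edgeSet_coe, Set.ncard_image_of_injective _
    (Sym2.map.injective Subtype.val_injective), Nat.card_coe_set_eq]

lemma verts_sup_subgraphOfAdj {H : G.Subgraph} {x y : V} (hxy : G.Adj x y) (hx : x ∈ H.verts) :
    (H ⊔ G.subgraphOfAdj hxy).verts = insert y H.verts := by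
  ext z
  simp only [verts_sup, subgraphOfAdj_verts, Set.mem_union, Set.mem_insert_iff,
    Set.mem_singleton_iff]
  constructor
  · rintro (hz | rfl | rfl) <;> tauto
  · rintro (rfl | hz) <;> tauto

lemma isTree_coe_sup_subgraphOfAdj [Finite V] {H : G.Subgraph} (hH : H.coe.IsTree) {x y : V}
    (hxy : G.Adj x y) (hx : x ∈ H.verts) (hy : y ∉ H.verts) :
    (H ⊔ G.subgraphOfAdj hxy).coe.IsTree := by
  rw [isTree_iff_connected_and_card, card_edgeSet_coe, Nat.card_coe_set_eq] at hH ⊢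
  have hnew : s(x, y) ∉ H.edgeSet := fun h => hy (H.edge_vert (Subgraph.mem_edgeSet.mp h).symm)
  refine ⟨(connected_sup ⟨hH.1.preconnected⟩ (subgraphOfAdj_connected hxy).preconnected
    ⟨x, hx, by simp⟩).coe, ?_⟩
  rw [edgeSet_sup, edgeSet_subgraphOfAdj, Set.union_singleton, Set.ncard_insert_of_notMem hnew,
    verts_sup_subgraphOfAdj hxy hx, Set.ncard_insert_of_notMem hy, hH.2]

lemma exists_adj_mem_notMem {H : G.Subgraph} (hH : H.coe.Preconnected) {W : Set V} {a b : V}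
    (ha : a ∈ H.verts) (hb : b ∈ H.verts) (haW : a ∈ W) (hbW : b ∉ W) :
    ∃ x y, H.Adj x y ∧ x ∈ W ∧ y ∉ W := by
  obtain ⟨p⟩ := hH ⟨a, ha⟩ ⟨b, hb⟩
  obtain ⟨d, -, hd₁, hd₂⟩ := p.exists_boundary_dart (Subtype.val ⁻¹' W) haW hbW
  exact ⟨d.fst, d.snd, d.adj, hd₁, hd₂⟩

end SimpleGraph.Subgraph

open SimpleGraph Finset

section Rainbow

variable {V ι : Type} {T : ι → (⊤ : SimpleGraph V).Subgraph}

def IsRainbowSubtreeIn (T : ι → (⊤ : SimpleGraph V).Subgraph) (S : Finset ι)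
    (R : (⊤ : SimpleGraph V).Subgraph) : Prop :=
  R.coe.IsTree ∧
    ∃ g : Sym2 V → ι, Set.InjOn g R.edgeSet ∧ ∀ e ∈ R.edgeSet, g e ∈ S ∧ e ∈ (T (g e)).edgeSet

lemma IsRainbowSubtreeIn.isRainbowSubtree {S : Finset ι} {R : (⊤ : SimpleGraph V).Subgraph}
    (hR : IsRainbowSubtreeIn T S R) : IsRainbowSubtree T R := by
  obtain ⟨htree, g, hinj, hg⟩ := hR
  exact ⟨htree, g, hinj, fun e he => (hg e he).2⟩

lemma isRainbowSubtreeIn_singletonSubgraph [Nonempty ι] (T : ι → (⊤ : SimpleGraph V).Subgraph)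
    (v : V) : IsRainbowSubtreeIn T ∅ ((⊤ : SimpleGraph V).singletonSubgraph v) :=
  ⟨IsTree.coe_singletonSubgraph _ v, fun _ => Classical.arbitrary ι, by simp, by simp⟩

lemma IsRainbowSubtreeIn.exists_extend [Finite V] [DecidableEq ι] {S : Finset ι}
    {R : (⊤ : SimpleGraph V).Subgraph} (hR : IsRainbowSubtreeIn T S R) {i : ι} (hi : i ∉ S)
    (hTi : (T i).coe.Preconnected) {a b : V} (haT : a ∈ (T i).verts) (haR : a ∈ R.verts)
    (hbT : b ∈ (T i).verts) (hbR : b ∉ R.verts) :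
    ∃ y ∉ R.verts, ∃ R', IsRainbowSubtreeIn T (insert i S) R' ∧ R'.verts = insert y R.verts := by
  classical
  obtain ⟨x, y, hxy, hx, hy⟩ := Subgraph.exists_adj_mem_notMem hTi haT hbT haR hbR
  have htop : (⊤ : SimpleGraph V).Adj x y := (T i).adj_sub hxy
  obtain ⟨htree, g, hinj, hg⟩ := hR
  have hnew : s(x, y) ∉ R.edgeSet := fun h => hy (R.edge_vert (Subgraph.mem_edgeSet.mp h).symm)
  have hupd : Set.EqOn (Function.update g s(x, y) i) g R.edgeSet := fun e he =>
    Function.update_of_ne (ne_of_mem_of_not_mem he hnew) _ _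
  refine ⟨y, hy, R ⊔ (⊤ : SimpleGraph V).subgraphOfAdj htop,
    ⟨Subgraph.isTree_coe_sup_subgraphOfAdj htree htop hx hy, Function.update g s(x, y) i, ?_, ?_⟩,
    Subgraph.verts_sup_subgraphOfAdj htop hx⟩
  all_goals rw [Subgraph.edgeSet_sup, edgeSet_subgraphOfAdj, Set.union_singleton]
  · rw [Set.injOn_insert hnew, hupd.image_eq, Function.update_self]
    exact ⟨hinj.congr hupd.symm, fun ⟨e, he, hge⟩ => hi (hge ▸ (hg e he).1)⟩
  · refine Set.forall_mem_insert.mpr ⟨by simpa using hxy, fun e he => ?_⟩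
    rw [hupd he]
    exact ⟨mem_insert_of_mem (hg e he).1, (hg e he).2⟩

lemma exists_isRainbowSubtreeIn [Finite V] [Nonempty ι] [DecidableEq ι] {n : ℕ}
    (hconn : ∀ i, (T i).coe.Preconnected) (hcard : ∀ i, (T i).verts.ncard = n) {v : V}
    {S : Finset ι} (hS : ∀ i ∈ S, v ∈ (T i).verts) (hSn : #S < n) :
    ∃ R, IsRainbowSubtreeIn T S R ∧ v ∈ R.verts ∧ R.verts.ncard = #S + 1 := by
  induction S using Finset.induction_on with
  | empty => exact ⟨_, isRainbowSubtreeIn_singletonSubgraph T v, by simp, by simp⟩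
  | insert i S hi ih =>
    rw [card_insert_of_notMem hi] at hSn ⊢
    obtain ⟨R, hR, hvR, hRcard⟩ :=
      ih (fun j hj => hS j (mem_insert_of_mem hj)) (by omega)
    obtain ⟨b, hbT, hbR⟩ := Set.exists_mem_notMem_of_ncard_lt_ncard
      (s := R.verts) (t := (T i).verts) (by rw [hcard i]; omega)
    obtain ⟨y, hy, R', hR', hR'verts⟩ :=
      hR.exists_extend hi (hconn i) (hS i (mem_insert_self i S)) hvR hbT hbR
    refine ⟨R', hR', hR'verts ▸ Set.mem_insert_of_mem y hvR, ?_⟩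
    rw [hR'verts, Set.ncard_insert_of_notMem hy, hRcard]

end Rainbow

section TreesAt

variable {V ι : Type} [Fintype ι]

open Classical in
noncomputable def treesAt {G : SimpleGraph V} (T : ι → G.Subgraph) (v : V) : Finset ι :=
  {i | v ∈ (T i).verts}

@[simp]
lemma mem_treesAt {G : SimpleGraph V} {T : ι → G.Subgraph} {v : V} {i : ι} :
    i ∈ treesAt T v ↔ v ∈ (T i).verts := by
  simp [treesAt]

lemma sum_card_treesAt [Fintype V] {G : SimpleGraph V} (T : ι → G.Subgraph) :
    ∑ v, #(treesAt T v) = ∑ i, (T i).verts.ncard := by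
  classical
  have h := sum_card_bipartiteAbove_eq_sum_card_bipartiteBelow (s := univ) (t := univ)
    (r := fun v i => v ∈ (T i).verts)
  simp only [bipartiteAbove, bipartiteBelow] at h
  convert h using 2 with v - i
  · simp [treesAt]
  · rw [Set.ncard_eq_toFinset_card']
    simp

variable {T : ι → (⊤ : SimpleGraph V).Subgraph} {n : ℕ}

lemma card_treesAt_le_of_not_hasRainbowTree [Finite V] (hconn : ∀ i, (T i).coe.Preconnected)
    (hcard : ∀ i, (T i).verts.ncard = n) (hn : 2 ≤ n) (hfree : ¬ HasRainbowTree T n) (v : V) :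
    #(treesAt T v) ≤ n - 2 := by
  classical
  by_contra! hlt
  obtain ⟨S, hSA, hS⟩ := exists_subset_card_eq (s := treesAt T v) (n := n - 1) (by omega)
  obtain ⟨i, -⟩ := card_pos.mp (by omega : 0 < #(treesAt T v))
  have : Nonempty ι := ⟨i⟩
  obtain ⟨R, hR, -, hRcard⟩ := exists_isRainbowSubtreeIn hconn hcard
    (fun i hi => mem_treesAt.mp (hSA hi)) (by omega)
  exact hfree ⟨R, hR.isRainbowSubtree, by omega⟩

lemma card_treesAt_eq_of_not_hasRainbowTree [Fintype V] (hconn : ∀ i, (T i).coe.Preconnected)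
    (hcard : ∀ i, (T i).verts.ncard = n) (hn : 2 ≤ n) (hfree : ¬ HasRainbowTree T n)
    (hsize : Fintype.card ι * n = Fintype.card V * (n - 2)) (v : V) :
    #(treesAt T v) = n - 2 := by
  have hsum : ∑ v, #(treesAt T v) = ∑ _v : V, (n - 2) := by
    simp [sum_card_treesAt, hcard, hsize]
  exact (sum_eq_sum_iff_of_le fun v _ =>
    card_treesAt_le_of_not_hasRainbowTree hconn hcard hn hfree v).mp hsum v (mem_univ v)

end TreesAt

structure IsExtremalRainbowFree {V ι : Type} [Fintype ι] (T : ι → (⊤ : SimpleGraph V).Subgraph)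
    (n : ℕ) : Prop where
  preconnected : ∀ i, (T i).coe.Preconnected
  ncard_verts : ∀ i, (T i).verts.ncard = n
  not_hasRainbowTree : ¬ HasRainbowTree T n
  card_treesAt : ∀ v, #(treesAt T v) = n - 2

namespace IsExtremalRainbowFree

variable {V ι : Type} [Fintype V] [Fintype ι] {T : ι → (⊤ : SimpleGraph V).Subgraph} {n : ℕ}

lemma exists_treesAt_eq_on [Nonempty ι] (h : IsExtremalRainbowFree T n) (hn : 2 ≤ n) (w : V) :
    ∃ R : Set V, w ∈ R ∧ R.ncard = n - 1 ∧ ∀ x ∈ R, treesAt T x = treesAt T w := by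
  classical
  obtain ⟨R, hR, hwR, hRcard⟩ := exists_isRainbowSubtreeIn h.preconnected h.ncard_verts
    (S := treesAt T w) (fun i hi => mem_treesAt.mp hi) (by rw [h.card_treesAt]; omega)
  rw [h.card_treesAt] at hRcard
  have hdisj : ∀ j ∉ treesAt T w, ∀ x ∈ R.verts, x ∉ (T j).verts := by
    intro j hj x hxR hxT
    obtain ⟨b, hbT, hbR⟩ := Set.exists_mem_notMem_of_ncard_lt_ncard
      (s := R.verts) (t := (T j).verts) (by rw [h.ncard_verts j, hRcard]; omega)
    obtain ⟨y, hy, R', hR', hR'verts⟩ := hR.exists_extend hj (h.preconnected j) hxT hxR hbT hbR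
    exact h.not_hasRainbowTree ⟨R', hR'.isRainbowSubtree, by
      rw [hR'verts, Set.ncard_insert_of_notMem hy, hRcard]; omega⟩
  refine ⟨R.verts, hwR, by omega, fun x hx => ?_⟩
  refine eq_of_subset_of_card_le (fun j hj => ?_) (by rw [h.card_treesAt, h.card_treesAt])
  by_contra hj'
  exact hdisj j hj' x hx (mem_treesAt.mp hj)

lemma treesAt_eq_of_mem_verts (h : IsExtremalRainbowFree T n) (hn : 3 ≤ n) {i : ι} {x y : V}
    (hx : x ∈ (T i).verts) (hy : y ∈ (T i).verts) : treesAt T x = treesAt T y := by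
  have : Nonempty ι := ⟨i⟩
  have hsub : ∀ z ∈ (T i).verts, ∀ R : Set V, (∀ u ∈ R, treesAt T u = treesAt T z) →
      R ⊆ (T i).verts := fun z hz R hR u hu =>
    mem_treesAt.mp ((hR u hu).symm ▸ mem_treesAt.mpr hz)
  obtain ⟨Rx, -, hRx, hAx⟩ := h.exists_treesAt_eq_on (by omega) x
  obtain ⟨Ry, -, hRy, hAy⟩ := h.exists_treesAt_eq_on (by omega) y
  obtain ⟨z, hzx, hzy⟩ : (Rx ∩ Ry).Nonempty := by
    have hunion := Set.ncard_union_add_ncard_inter Rx Ry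
    have hle := Set.ncard_le_ncard (Set.union_subset (hsub x hx Rx hAx) (hsub y hy Ry hAy))
    rw [h.ncard_verts i] at hle
    rw [← Set.ncard_pos]
    omega
  rw [← hAx z hzx, hAy z hzy]

lemma verts_eq_setOf_treesAt_eq (h : IsExtremalRainbowFree T n) (hn : 3 ≤ n) {i : ι} {v : V}
    (hv : v ∈ (T i).verts) : (T i).verts = {u | treesAt T u = treesAt T v} := by
  ext u
  refine ⟨fun hu => h.treesAt_eq_of_mem_verts hn hu hv, fun hu => ?_⟩
  exact mem_treesAt.mp ((show treesAt T u = treesAt T v from hu).symm ▸ mem_treesAt.mpr hv)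

lemma ncard_setOf_treesAt_eq (h : IsExtremalRainbowFree T n) (hn : 3 ≤ n) (v : V) :
    {u | treesAt T u = treesAt T v}.ncard = n := by
  obtain ⟨i, hi⟩ := card_pos.mp (by rw [h.card_treesAt]; omega : 0 < #(treesAt T v))
  rw [← h.verts_eq_setOf_treesAt_eq hn (mem_treesAt.mp hi), h.ncard_verts]

lemma exists_verts_eq_setOf_treesAt_eq (h : IsExtremalRainbowFree T n) (hn : 3 ≤ n) (i : ι) :
    ∃ v, (T i).verts = {u | treesAt T u = treesAt T v} := by
  obtain ⟨v, hv⟩ := Set.nonempty_of_ncard_ne_zero (s := (T i).verts)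
    (by rw [h.ncard_verts i]; omega)
  exact ⟨v, h.verts_eq_setOf_treesAt_eq hn hv⟩

end IsExtremalRainbowFree

section Partition

variable {V β : Type} [Fintype V] {n : ℕ}

lemma exists_fibers_ncard_eq (h : n ∣ Fintype.card V) :
    ∃ f : V → Fin (Fintype.card V / n), ∀ v, {u | f u = f v}.ncard = n := by
  let e : V ≃ Fin (Fintype.card V / n) × Fin n :=
    Fintype.equivOfCardEq (by simp [Nat.div_mul_cancel h])
  refine ⟨fun v => (e v).1, fun v => ?_⟩
  have hfib : {u | (e u).1 = (e v).1} = e ⁻¹' ({(e v).1} ×ˢ Set.univ) := by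
    ext u; simp
  rw [hfib, Set.ncard_preimage_of_injective_subset_range e.injective (by simp), Set.ncard_prod,
    Set.ncard_singleton, Set.ncard_univ, Nat.card_fin, one_mul]

lemma card_image_mul_eq_card (f : V → β) [DecidableEq β]
    (hf : ∀ v, {u | f u = f v}.ncard = n) : #(univ.image f) * n = Fintype.card V := by
  rw [← card_univ, card_eq_sum_card_image f univ, ← smul_eq_mul, ← sum_const]
  refine sum_congr rfl fun b hb => ?_
  obtain ⟨v, -, rfl⟩ := mem_image.mp hb
  rw [← hf v, ← Set.ncard_coe_finset]
  congr 1; ext; simp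

lemma exists_partition_of_fibers {ι : Type} [Fintype ι] {G : SimpleGraph V}
    (T : ι → G.Subgraph) (f : V → β) (hn : 0 < n) (hf : ∀ v, {u | f u = f v}.ncard = n)
    (hT : ∀ i, ∃ v, (T i).verts = {u | f u = f v}) {k : ℕ} (hk : ∀ v, #(treesAt T v) = k) :
    ∃ P : Fin (Fintype.card V / n) → Set V,
      (Pairwise fun i j => Disjoint (P i) (P j)) ∧
      (⋃ j, P j) = Set.univ ∧
      (∀ j, (P j).ncard = n) ∧
      (∀ i, ∃ j, (T i).verts = P j) ∧
      (∀ j, {i : ι | (T i).verts = P j}.ncard = k) := by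
  classical
  let e := (univ.image f).equivFinOfCardEq
    (Nat.div_eq_of_eq_mul_left hn (card_image_mul_eq_card f hf).symm).symm
  have hsurj : ∀ v, ∃ j, (e.symm j : β) = f v := fun v =>
    ⟨e ⟨f v, mem_image_of_mem f (mem_univ v)⟩, by simp⟩
  have hrange : ∀ j, ∃ v, f v = (e.symm j : β) := fun j => by
    simpa using (mem_image.mp (e.symm j).2)
  refine ⟨fun j => {u | f u = e.symm j}, fun j j' hjj' => ?_, ?_, fun j => ?_, fun i => ?_,
    fun j => ?_⟩
  · refine Set.disjoint_left.mpr fun u hu hu' => hjj' (e.symm.injective (Subtype.ext ?_))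
    exact (show f u = _ from hu).symm.trans hu'
  · refine Set.eq_univ_of_forall fun u => Set.mem_iUnion.mpr ?_
    obtain ⟨j, hj⟩ := hsurj u
    exact ⟨j, hj.symm⟩
  · obtain ⟨v, hv⟩ := hrange j
    simp only [← hv, hf]
  · obtain ⟨v, hv⟩ := hT i
    obtain ⟨j, hj⟩ := hsurj v
    exact ⟨j, by simp only [hv, hj]⟩
  · obtain ⟨v, hv⟩ := hrange j
    rw [← hk v, ← Set.ncard_coe_finset]
    congr 1
    ext i
    obtain ⟨w, hw⟩ := hT i
    rw [mem_coe, mem_treesAt]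
    show (T i).verts = {u | f u = e.symm j} ↔ v ∈ (T i).verts
    rw [← hv, hw]
    exact ⟨fun h => (Set.ext_iff.mp h v).mpr rfl, fun h => by rw [show f v = f w from h]⟩

end Partition

theorem tree_transversal_extremal_characterization {V : Type} [Fintype V]
    (n m t : ℕ) (hn : 2 ≤ n)
    (hm : Fintype.card V = m) (hdvd : n ∣ m)
    (T : Fin t → (⊤ : SimpleGraph V).Subgraph)
    (htree : ∀ i, (T i).coe.IsTree) (hverts : ∀ i, (T i).verts.ncard = n)
    (hfree : ¬ HasRainbowTree T n)
    (hsize : t = m * (n - 2) / n) :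
    ∃ P : Fin (m / n) → Set V,
      (Pairwise fun i j => Disjoint (P i) (P j)) ∧
      (⋃ j, P j) = Set.univ ∧
      (∀ j, (P j).ncard = n) ∧
      (∀ i, ∃ j, (T i).verts = P j) ∧
      (∀ j, {i : Fin t | (T i).verts = P j}.ncard = n - 2) := by
  subst hm
  obtain rfl | hn3 : n = 2 ∨ 3 ≤ n := by omega
  · obtain rfl : t = 0 := by simpa using hsize
    obtain ⟨f, hf⟩ := exists_fibers_ncard_eq hdvd
    exact exists_partition_of_fibers T f two_pos hf (fun i => i.elim0) (fun v => by simp [treesAt])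
  · have hconn : ∀ i, (T i).coe.Preconnected := fun i => (htree i).connected.preconnected
    have hcount : Fintype.card (Fin t) * n = Fintype.card V * (n - 2) := by
      obtain ⟨q, hq⟩ := hdvd
      rw [Fintype.card_fin, hsize, hq, mul_assoc, Nat.mul_div_cancel_left _ (by omega)]
      ring
    have h : IsExtremalRainbowFree T n := ⟨hconn, hverts, hfree,
      card_treesAt_eq_of_not_hasRainbowTree hconn hverts hn hfree hcount⟩
    exact exists_partition_of_fibers T (treesAt T) (by omega) (h.ncard_setOf_treesAt_eq hn3)
      (h.exists_verts_eq_setOf_treesAt_eq hn3) h.card_treesAt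
end
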